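/- arXiv:2605.26707 — 8 statements merged into one kernel-verified Lean document; each statement's English description precedes it below -/
import Mathlib

section
/- Let P be an n×n real symmetric matrix with tr(P) = 0, and let θ be the number of negative eigenvalues of P. If θ ≥ 1, then the sum of the squares of the θ smallest (i.e., all negative) eigenvalues of P is at least tr(P²)/(2θ). -/
open Matrix Finset

lemma traceConjU {n : ℕ} (U : Matrix.unitaryGroup (Fin n) ℝ) (X : Matrix (Fin n) (Fin n) ℝ) :
    ((U : Matrix (Fin n) (Fin n) ℝ) * X * star (U : Matrix (Fin n) (Fin n) ℝ)).trace = X.trace := by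
  rw [Matrix.trace_mul_cycle, U.2.1, one_mul]

lemma conjU_pow {n : ℕ} (U : Matrix.unitaryGroup (Fin n) ℝ) (D : Matrix (Fin n) (Fin n) ℝ)
    (k : ℕ) : ((U : Matrix (Fin n) (Fin n) ℝ) * D * star (U : Matrix (Fin n) (Fin n) ℝ)) ^ k
      = (U : Matrix (Fin n) (Fin n) ℝ) * D ^ k * star (U : Matrix (Fin n) (Fin n) ℝ) := by
  induction k with
  | zero => simp [U.2.2]
  | succ m ih =>
    rw [pow_succ, ih, pow_succ]
    have h1 : star (U : Matrix (Fin n) (Fin n) ℝ) * (U : Matrix (Fin n) (Fin n) ℝ) = 1 := U.2.1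
    calc (U : Matrix (Fin n) (Fin n) ℝ) * D ^ m * star (U : Matrix (Fin n) (Fin n) ℝ)
          * ((U : Matrix (Fin n) (Fin n) ℝ) * D * star (U : Matrix (Fin n) (Fin n) ℝ))
        = (U : Matrix (Fin n) (Fin n) ℝ) * D ^ m
          * (star (U : Matrix (Fin n) (Fin n) ℝ) * (U : Matrix (Fin n) (Fin n) ℝ))
          * D * star (U : Matrix (Fin n) (Fin n) ℝ) := by noncomm_ring
      _ = _ := by rw [h1]; noncomm_ring

lemma trace_pow_eq {n : ℕ} (P : Matrix (Fin n) (Fin n) ℝ) (hP : P.IsHermitian) (k : ℕ) :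
    (P ^ k).trace = ∑ i, (hP.eigenvalues i) ^ k := by
  have h : P = (hP.eigenvectorUnitary : Matrix (Fin n) (Fin n) ℝ)
      * Matrix.diagonal (RCLike.ofReal ∘ hP.eigenvalues)
      * star (hP.eigenvectorUnitary : Matrix (Fin n) (Fin n) ℝ) := hP.spectral_theorem
  have h2 := conjU_pow hP.eigenvectorUnitary (Matrix.diagonal (RCLike.ofReal ∘ hP.eigenvalues)) k
  rw [← h] at h2
  rw [h2, traceConjU, Matrix.diagonal_pow, Matrix.trace_diagonal]
  simp

/-- For a real symmetric matrix `P` with trace zero and `θ ≥ 1`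
negative eigenvalues, the sum of the squares of the negative eigenvalues
is at least `tr(P²)/(2θ)`. -/
theorem stmt2 {n : ℕ} (P : Matrix (Fin n) (Fin n) ℝ)
    (hP : P.IsHermitian) (htr : P.trace = 0)
    (θ : ℕ) (hθ : θ = (Finset.univ.filter (fun i => hP.eigenvalues i < 0)).card)
    (hθ1 : 1 ≤ θ) :
    Matrix.trace (P ^ 2) / (2 * θ) ≤
      ∑ i ∈ Finset.univ.filter (fun i => hP.eigenvalues i < 0),
        (hP.eigenvalues i) ^ 2 := by
  set L := hP.eigenvalues with hL
  set N := Finset.univ.filter (fun i => L i < 0) with hN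
  have hsum : ∑ i, L i = 0 := by
    have := trace_pow_eq P hP 1
    simpa [htr] using this.symm
  have htr2 : (P ^ 2).trace = ∑ i, L i ^ 2 := trace_pow_eq P hP 2
  have hsplit : ∑ i, L i = ∑ i ∈ N, L i + ∑ i ∈ Nᶜ, L i := (Finset.sum_add_sum_compl N _).symm
  have hcomp : ∑ i ∈ Nᶜ, L i = ∑ i ∈ N, (-L i) := by
    rw [Finset.sum_neg_distrib]
    linarith
  have hnonneg : ∀ i ∈ Nᶜ, 0 ≤ L i := by
    intro i hi
    simp [hN, Finset.mem_compl, Finset.mem_filter] at hi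
    linarith
  have h1 : ∑ i ∈ Nᶜ, L i ^ 2 ≤ (∑ i ∈ Nᶜ, L i) ^ 2 := by
    calc ∑ i ∈ Nᶜ, L i ^ 2 ≤ ∑ i ∈ Nᶜ, L i * (∑ j ∈ Nᶜ, L j) := by
          apply Finset.sum_le_sum
          intro i hi
          rw [sq]
          exact mul_le_mul_of_nonneg_left (Finset.single_le_sum hnonneg hi) (hnonneg i hi)
      _ = (∑ i ∈ Nᶜ, L i) ^ 2 := by rw [← Finset.sum_mul, sq]
  have h2 : (∑ i ∈ N, (-L i)) ^ 2 ≤ θ * ∑ i ∈ N, L i ^ 2 := by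
    have := sq_sum_le_card_mul_sum_sq (s := N) (f := fun i => -L i)
    simpa [hθ, neg_sq] using this
  have hSN : 0 ≤ ∑ i ∈ N, L i ^ 2 := Finset.sum_nonneg fun i _ => sq_nonneg _
  have hθR : (1 : ℝ) ≤ θ := by exact_mod_cast hθ1
  have key : (P ^ 2).trace ≤ 2 * θ * ∑ i ∈ N, L i ^ 2 := by
    have hsq : ∑ i, L i ^ 2 = ∑ i ∈ N, L i ^ 2 + ∑ i ∈ Nᶜ, L i ^ 2 :=
      (Finset.sum_add_sum_compl N _).symm
    have hle : ∑ i ∈ Nᶜ, L i ^ 2 ≤ θ * ∑ i ∈ N, L i ^ 2 := by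
      calc ∑ i ∈ Nᶜ, L i ^ 2 ≤ (∑ i ∈ Nᶜ, L i) ^ 2 := h1
        _ = (∑ i ∈ N, (-L i)) ^ 2 := by rw [hcomp]
        _ ≤ θ * ∑ i ∈ N, L i ^ 2 := h2
    rw [htr2, hsq]
    nlinarith
  rw [div_le_iff₀ (by positivity)]
  linarith [key]
end

section
/- Let P be an n×n real symmetric matrix with tr(P) = 0, let ν be its number of positive eigenvalues and θ its number of negative eigenvalues, with ν, θ ≥ 1. Then the sum of the ν positive eigenvalues satisfies Σ_{i=1}^{ν} λᵢ(P) ≤ √( (θν/(θ+ν)) · tr(P²) ). -/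
/-!
Let `S` be the sum of the positive eigenvalues. Since the trace vanishes, the negative eigenvalues
sum to `-S`, so Cauchy–Schwarz on the two groups gives `S² ≤ ν · Σ₊ λᵢ²` and `S² ≤ θ · Σ₋ λᵢ²`.
Hence `(1/ν + 1/θ) S² ≤ Σ λᵢ² = tr(P²)`.
-/

open Finset

namespace Matrix.IsHermitian

variable {𝕜 n : Type*} [RCLike 𝕜] [Fintype n] [DecidableEq n] {A : Matrix n n 𝕜}

theorem trace_pow_eq_sum_eigenvalues_pow (hA : A.IsHermitian) (k : ℕ) :
    (A ^ k).trace = ∑ i, (hA.eigenvalues i : 𝕜) ^ k := by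
  conv_lhs => rw [hA.spectral_theorem, ← map_pow, Unitary.conjStarAlgAut_apply, trace_mul_cycle,
    Unitary.coe_star_mul_self, one_mul, diagonal_pow, trace_diagonal]
  simp

end Matrix.IsHermitian

section PositivePart

variable {ι : Type*} [Fintype ι] (f : ι → ℝ)

theorem sum_filter_neg_eq_neg_sum_filter_pos (hf : ∑ i, f i = 0) :
    ∑ i with f i < 0, f i = -∑ i with 0 < f i, f i := by
  have hsplit : ∀ i, (if 0 < f i then f i else 0) + (if f i < 0 then f i else 0) = f i := by
    intro i
    split_ifs <;> linarith
  rw [sum_filter, sum_filter, eq_neg_iff_add_eq_zero, add_comm, ← sum_add_distrib]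
  simpa only [hsplit] using hf

theorem sum_filter_pos_sq_add_sum_filter_neg_sq_le :
    ∑ i with 0 < f i, f i ^ 2 + ∑ i with f i < 0, f i ^ 2 ≤ ∑ i, f i ^ 2 := by
  classical
  rw [← sum_union (disjoint_filter.mpr fun i _ hpos hneg => (hpos.trans hneg).false)]
  exact sum_le_univ_sum_of_nonneg fun i => sq_nonneg _

theorem card_add_card_mul_sq_sum_filter_pos_le (hf : ∑ i, f i = 0) :
    ((#{i | f i < 0} : ℝ) + #{i | 0 < f i}) * (∑ i with 0 < f i, f i) ^ 2 ≤
      #{i | f i < 0} * #{i | 0 < f i} * ∑ i, f i ^ 2 := by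
  set S := ∑ i with 0 < f i, f i
  have hpos : S ^ 2 ≤ #{i | 0 < f i} * ∑ i with 0 < f i, f i ^ 2 :=
    sq_sum_le_card_mul_sum_sq (s := {i | 0 < f i}) (f := f)
  have hneg : S ^ 2 ≤ #{i | f i < 0} * ∑ i with f i < 0, f i ^ 2 := by
    simpa only [sum_filter_neg_eq_neg_sum_filter_pos f hf, neg_sq] using
      sq_sum_le_card_mul_sum_sq (s := {i | f i < 0}) (f := f)
  calc ((#{i | f i < 0} : ℝ) + #{i | 0 < f i}) * S ^ 2
      = #{i | f i < 0} * S ^ 2 + #{i | 0 < f i} * S ^ 2 := by ring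
    _ ≤ #{i | f i < 0} * (#{i | 0 < f i} * ∑ i with 0 < f i, f i ^ 2) +
          #{i | 0 < f i} * (#{i | f i < 0} * ∑ i with f i < 0, f i ^ 2) := by gcongr
    _ = #{i | f i < 0} * #{i | 0 < f i} *
          (∑ i with 0 < f i, f i ^ 2 + ∑ i with f i < 0, f i ^ 2) := by ring
    _ ≤ #{i | f i < 0} * #{i | 0 < f i} * ∑ i, f i ^ 2 := by
      gcongr
      exact sum_filter_pos_sq_add_sum_filter_neg_sq_le f

theorem sq_sum_filter_pos_le (hf : ∑ i, f i = 0) :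
    (∑ i with 0 < f i, f i) ^ 2 ≤
      #{i | f i < 0} * #{i | 0 < f i} / (#{i | f i < 0} + #{i | 0 < f i}) * ∑ i, f i ^ 2 := by
  rcases Nat.eq_zero_or_pos #{i | 0 < f i} with hempty | hcard
  · rw [card_eq_zero.mp hempty, sum_empty]
    simp
  · rw [div_mul_eq_mul_div, le_div_iff₀ (by positivity), mul_comm]
    exact card_add_card_mul_sq_sum_filter_pos_le f hf

end PositivePart

theorem stmt4_general {n : ℕ} (P : Matrix (Fin n) (Fin n) ℝ)
    (hP : P.IsHermitian) (htr : P.trace = 0)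
    (ν θ : ℕ)
    (hν : ν = (Finset.univ.filter (fun i => 0 < hP.eigenvalues i)).card)
    (hθ : θ = (Finset.univ.filter (fun i => hP.eigenvalues i < 0)).card) :
    ∑ i ∈ Finset.univ.filter (fun i => 0 < hP.eigenvalues i), hP.eigenvalues i ≤
      Real.sqrt ((θ * ν / (θ + ν)) * Matrix.trace (P ^ 2)) := by
  subst hν hθ
  have hsum : ∑ i, hP.eigenvalues i = 0 := by
    simpa [hP.trace_eq_sum_eigenvalues] using htr
  have htr2 : (P ^ 2).trace = ∑ i, hP.eigenvalues i ^ 2 := by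
    simpa using hP.trace_pow_eq_sum_eigenvalues_pow 2
  rw [htr2]
  exact Real.le_sqrt_of_sq_le (sq_sum_filter_pos_le _ hsum)

/-- For a real symmetric `P` with trace zero, `ν ≥ 1` positive and
`θ ≥ 1` negative eigenvalues, the sum of the positive eigenvalues is at most
`√((θν/(θ+ν)) tr(P²))`. -/
theorem stmt4 {n : ℕ} (P : Matrix (Fin n) (Fin n) ℝ)
    (hP : P.IsHermitian) (htr : P.trace = 0)
    (ν θ : ℕ)
    (hν : ν = (Finset.univ.filter (fun i => 0 < hP.eigenvalues i)).card)
    (hθ : θ = (Finset.univ.filter (fun i => hP.eigenvalues i < 0)).card)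
    (hν1 : 1 ≤ ν) (hθ1 : 1 ≤ θ) :
    ∑ i ∈ Finset.univ.filter (fun i => 0 < hP.eigenvalues i), hP.eigenvalues i ≤
      Real.sqrt ((θ * ν / (θ + ν)) * Matrix.trace (P ^ 2)) :=
  stmt4_general P hP htr ν θ hν hθ
end

section
/- Let M be an n×n real symmetric matrix and let s be a positive integer with λ_s(M) > tr(M)/n. Let θ be the number of eigenvalues of M less than tr(M)/n. Then for every integer k with s ≤ k ≤ n, Σ_{i=1}^{k} λᵢ(M) ≤ (k/n)·tr(M) + √( tr((M − (tr(M)/n)·I)²) · (k − s²/(θ+s)) ). -/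
/-!
Shift the eigenvalues by their mean `μ = tr M / n`, so that `gᵢ = λᵢ - μ` sums to zero and
`∑ gᵢ² = tr ((M - μ I)²)`. Only the nonnegative `gᵢ` among the top `k` matter. The first `s` of
them, with sum `A`, are at most the total negative mass, so Cauchy–Schwarz bounds `A²` both by
`s ∑_{i<s} gᵢ²` and by `θ ∑_{gᵢ<0} gᵢ²`, hence by `sθ/(s+θ)` times the sum of the two.
Cauchy–Schwarz on the remaining nonnegative terms and the two-term Cauchy–Schwarz inequality then
give the coefficient `sθ/(s+θ) + (k - s) = k - s²/(θ+s)`.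
-/

open Finset

lemma add_sq_le_add_mul_add {a b p q x y : ℝ} (hp : 0 ≤ p) (hq : 0 ≤ q) (hx : 0 ≤ x)
    (hy : 0 ≤ y) (ha : a ^ 2 ≤ p * x) (hb : b ^ 2 ≤ q * y) :
    (a + b) ^ 2 ≤ (p + q) * (x + y) := by
  have hab : (2 * (a * b)) ^ 2 ≤ (p * y + q * x) ^ 2 := by
    nlinarith [sq_nonneg (p * y - q * x), mul_le_mul ha hb (sq_nonneg b) (by positivity)]
  nlinarith [(abs_le_of_sq_le_sq' hab (by positivity)).2]

lemma le_mul_div_add_mul_add {a s t x z : ℝ} (hs : 0 ≤ s) (ht : 0 ≤ t) (hx : a ≤ s * x)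
    (hz : a ≤ t * z) : a ≤ s * t / (s + t) * (x + z) := by
  rcases (add_nonneg hs ht).eq_or_lt with hst | hst
  · obtain rfl : s = 0 := by linarith
    obtain rfl : t = 0 := by linarith
    simpa using hx
  · rw [div_mul_eq_mul_div, le_div_iff₀ hst]
    nlinarith [mul_le_mul_of_nonneg_left hx ht, mul_le_mul_of_nonneg_left hz hs]

section SumZero

variable {ι : Type*} [Fintype ι] {g : ι → ℝ}

lemma sq_sum_le_of_sum_eq_zero_of_nonneg (hg : ∑ i, g i = 0) {P : Finset ι}
    (hP : ∀ i ∈ P, 0 ≤ g i) :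
    (∑ i ∈ P, g i) ^ 2 ≤ #P * #{i | g i < 0} / (#P + #{i | g i < 0}) *
      (∑ i ∈ P, g i ^ 2 + ∑ i with g i < 0, g i ^ 2) := by
  classical
  set R : Finset ι := {i | g i < 0}
  have hA : 0 ≤ ∑ i ∈ P, g i := sum_nonneg hP
  have hAR : ∑ i ∈ P, g i ≤ -∑ i ∈ R, g i := by
    have hPR : P ⊆ Rᶜ := fun i hi ↦ by simpa [R] using hP i hi
    have hRc : ∑ i ∈ P, g i ≤ ∑ i ∈ Rᶜ, g i :=
      sum_le_sum_of_subset_of_nonneg hPR fun i hi _ ↦ by simpa [R] using hi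
    linarith [sum_compl_add_sum R g]
  refine le_mul_div_add_mul_add (by positivity) (by positivity)
    (sq_sum_le_card_mul_sum_sq ..) ?_
  calc (∑ i ∈ P, g i) ^ 2 ≤ (∑ i ∈ R, g i) ^ 2 := by
        rw [← neg_sq (∑ i ∈ R, g i)]; exact pow_le_pow_left₀ hA hAR 2
    _ ≤ #R * ∑ i ∈ R, g i ^ 2 := sq_sum_le_card_mul_sum_sq ..

lemma sq_sum_le_sum_sq_mul_of_sum_eq_zero (hg : ∑ i, g i = 0) {P K : Finset ι} (hPK : P ⊆ K)
    (hK : ∀ i ∈ K, 0 ≤ g i) :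
    (∑ i ∈ K, g i) ^ 2 ≤
      (∑ i, g i ^ 2) * (#K - #P ^ 2 / (#{i | g i < 0} + #P)) := by
  classical
  set R : Finset ι := {i | g i < 0}
  have hRK : Disjoint R K :=
    disjoint_left.2 fun i hi hiK ↦ (hK i hiK).not_gt (by simpa [R] using hi)
  have hPR : Disjoint P R := (hRK.mono_right hPK).symm
  have hA := sq_sum_le_of_sum_eq_zero_of_nonneg hg fun i hi ↦ hK i (hPK hi)
  have hB := sq_sum_le_card_mul_sum_sq (s := K \ P) (f := g)
  have hcoeff : (#P * #R / (#P + #R) + #(K \ P) : ℝ) = #K - #P ^ 2 / (#R + #P) := by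
    rw [card_sdiff_of_subset hPK, Nat.cast_sub (card_le_card hPK)]
    obtain hP | hP := (#P).eq_zero_or_pos
    · simp [hP]
    · have : (0 : ℝ) < #P := by exact_mod_cast hP
      field_simp
      ring
  have hsq : ∑ i ∈ P, g i ^ 2 + ∑ i ∈ R, g i ^ 2 + ∑ i ∈ K \ P, g i ^ 2 ≤ ∑ i, g i ^ 2 := by
    rw [← sum_union hPR, ← sum_union]
    · exact sum_le_univ_sum_of_nonneg fun i ↦ sq_nonneg _
    · exact disjoint_union_left.2 ⟨disjoint_sdiff, hRK.mono_right sdiff_subset⟩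
  calc (∑ i ∈ K, g i) ^ 2 = (∑ i ∈ P, g i + ∑ i ∈ K \ P, g i) ^ 2 := by
        rw [add_comm, sum_sdiff hPK]
    _ ≤ (#P * #R / (#P + #R) + #(K \ P)) *
          (∑ i ∈ P, g i ^ 2 + ∑ i ∈ R, g i ^ 2 + ∑ i ∈ K \ P, g i ^ 2) :=
        add_sq_le_add_mul_add (by positivity) (by positivity) (by positivity) (by positivity) hA hB
    _ ≤ (∑ i, g i ^ 2) * (#K - #P ^ 2 / (#R + #P)) := by
        rw [hcoeff, mul_comm]
        exact mul_le_mul_of_nonneg_right hsq (hcoeff ▸ by positivity)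

lemma sum_le_sqrt_sum_sq_mul_of_sum_eq_zero (hg : ∑ i, g i = 0) {P K : Finset ι} (hPK : P ⊆ K)
    (hP : ∀ i ∈ P, 0 ≤ g i) :
    ∑ i ∈ K, g i ≤ √((∑ i, g i ^ 2) * (#K - #P ^ 2 / (#{i | g i < 0} + #P))) := by
  set Kpos := K.filter (0 ≤ g ·)
  have hPKpos : P ⊆ Kpos := fun i hi ↦ mem_filter.2 ⟨hPK hi, hP i hi⟩
  have hKpos : ∑ i ∈ K, g i ≤ ∑ i ∈ Kpos, g i := by
    rw [← sum_filter_add_sum_filter_not K (0 ≤ g ·), add_le_iff_nonpos_right]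
    exact sum_nonpos fun i hi ↦ (not_le.1 (mem_filter.1 hi).2).le
  have hcard : (#Kpos : ℝ) ≤ #K := by exact_mod_cast card_filter_le K _
  calc ∑ i ∈ K, g i ≤ |∑ i ∈ Kpos, g i| := hKpos.trans (le_abs_self _)
    _ ≤ _ := Real.abs_le_sqrt <|
      (sq_sum_le_sum_sq_mul_of_sum_eq_zero hg hPKpos fun i hi ↦ (mem_filter.1 hi).2).trans <|
        mul_le_mul_of_nonneg_left (by linarith) (sum_nonneg fun i _ ↦ sq_nonneg _)

end SumZero

lemma Matrix.IsHermitian.trace_sub_smul_one_sq {n : Type*} [Fintype n] [DecidableEq n]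
    {A : Matrix n n ℝ} (hA : A.IsHermitian) (c : ℝ) :
    ((A - c • 1) ^ 2).trace = ∑ i, (hA.eigenvalues i - c) ^ 2 := by
  set e := Unitary.conjStarAlgAut ℝ (Matrix n n ℝ) hA.eigenvectorUnitary
  have hconj : A - c • 1 = e (diagonal fun i ↦ hA.eigenvalues i - c) := by
    have hdiag : diagonal (fun i ↦ hA.eigenvalues i - c) = diagonal hA.eigenvalues - c • 1 := by
      ext i j; rcases eq_or_ne i j with rfl | h <;> simp [*]
    rw [hdiag, map_sub, map_smul, map_one]
    conv_lhs => rw [hA.spectral_theorem]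
    simp [e]
  rw [hconj, ← map_pow, diagonal_pow, Unitary.conjStarAlgAut_apply, trace_mul_cycle,
    Unitary.coe_star_mul_self, one_mul, trace_diagonal]
  rfl

/-- Upper bound for the sum of the `k` largest eigenvalues of a
real symmetric matrix `M`, where `λ_s(M) > tr(M)/n` and `θ` is the number of
eigenvalues below `tr(M)/n`: for `s ≤ k ≤ n`,
`∑_{i=1}^k λᵢ(M) ≤ (k/n) tr(M) + √(tr((M − (tr(M)/n)I)²) (k − s²/(θ+s)))`. -/
theorem stmt5 {n : ℕ} (M : Matrix (Fin n) (Fin n) ℝ)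
    (hM : M.IsHermitian)
    (lam : Fin n → ℝ) (σ : Equiv.Perm (Fin n))
    (hlam : lam = hM.eigenvalues ∘ σ) (hdec : Antitone lam)
    (s : ℕ) (hs1 : 1 ≤ s) (hsn : s ≤ n)
    (hse : M.trace / n < lam ⟨s - 1, by omega⟩)
    (θ : ℕ)
    (hθ : θ = (Finset.univ.filter (fun i => lam i < M.trace / n)).card)
    (k : ℕ) (hks : s ≤ k) (hkn : k ≤ n) :
    ∑ i ∈ Finset.univ.filter (fun i : Fin n => (i : ℕ) < k), lam i ≤
      ((k : ℝ) / n) * M.trace +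
        Real.sqrt
          (Matrix.trace ((M - (M.trace / n) • (1 : Matrix (Fin n) (Fin n) ℝ)) ^ 2) *
            ((k : ℝ) - (s : ℝ) ^ 2 / ((θ : ℝ) + s))) := by
  set μ := M.trace / n
  set g : Fin n → ℝ := fun i ↦ lam i - μ
  have hg : ∑ i, g i = 0 := by
    have htrace : ∑ i, lam i = M.trace := by
      simp [hlam, hM.trace_eq_sum_eigenvalues, Equiv.sum_comp σ hM.eigenvalues]
    have hn : (n : ℝ) ≠ 0 := Nat.cast_ne_zero.2 (by omega)
    simp only [g, sum_sub_distrib, htrace, sum_const, card_univ, Fintype.card_fin, nsmul_eq_mul, μ]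
    field_simp
    ring
  have hgsq : ∑ i, g i ^ 2 = ((M - μ • 1) ^ 2).trace := by
    rw [hM.trace_sub_smul_one_sq]
    simp only [g, hlam, Function.comp_apply]
    exact Equiv.sum_comp σ fun i ↦ (hM.eigenvalues i - μ) ^ 2
  have hθg : #{i | g i < 0} = θ := by simp [hθ, g, μ]
  set P : Finset (Fin n) := {i | (i : ℕ) < s}
  set K : Finset (Fin n) := {i | (i : ℕ) < k}
  have hP : ∀ i ∈ P, 0 ≤ g i := fun i hi ↦
    sub_nonneg.2 <| hse.le.trans <| hdec <| Fin.le_def.2 <| by simp [P] at hi; simp; omega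
  have hPK : P ⊆ K := fun i hi ↦ by simp [P, K] at hi ⊢; omega
  have key := sum_le_sqrt_sum_sq_mul_of_sum_eq_zero hg hPK hP
  rw [Fin.card_filter_val_lt, Fin.card_filter_val_lt, min_eq_right hkn, min_eq_right hsn, hθg,
    hgsq] at key
  calc ∑ i ∈ K, lam i = ∑ i ∈ K, g i + k * μ := by
        simp [g, K, sum_sub_distrib, Fin.card_filter_val_lt, hkn]
    _ ≤ _ := by
        rw [add_comm, mul_div_assoc', ← div_mul_eq_mul_div]
        gcongr
end

section
/- Let G be a simple graph on n ≥ 2 vertices with m edges and let θ be the number of negative adjacency eigenvalues of G. Then for every integer k with 1 ≤ k ≤ n, the sum of the k largest adjacency eigenvalues of G satisfies Σ_{i=1}^{k} λᵢ(G) ≤ √( 2m(k − 1/(θ+1)) ). -/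
/-!
Only two spectral facts enter: the eigenvalues sum to `tr A = 0` and their squares sum to
`tr A² = 2m`. For any real vector with zero sum, the sum `S` of any `k` entries is at most the
sum `U` of its nonnegative ones, say `a ≤ k` of them, and `U` is at most the total `T` of the
`θ` negative entries in absolute value. Cauchy–Schwarz gives `U² ≤ a Q` and `T² ≤ θ R` with
disjoint square sums `Q + R ≤ 2m`, hence `(a + θ) U² ≤ a θ · 2m`, and
`a θ / (a + θ) ≤ a - 1/(θ + 1)` because `a ≥ 1`.
-/

open Finset

namespace Matrix.IsHermitian

variable {𝕜 n : Type*} [RCLike 𝕜] [Fintype n] [DecidableEq n] {A : Matrix n n 𝕜}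

theorem trace_mul_self_eq_sum_sq_eigenvalues (hA : A.IsHermitian) :
    (A * A).trace = ∑ i, (hA.eigenvalues i : 𝕜) ^ 2 := by
  conv_lhs => rw [hA.spectral_theorem, ← map_mul, Unitary.conjStarAlgAut_apply, trace_mul_cycle,
    Unitary.coe_star_mul_self, one_mul, diagonal_mul_diagonal, trace_diagonal]
  simp [sq]

end Matrix.IsHermitian

theorem SimpleGraph.trace_adjMatrix_mul_self {V R : Type*} [Fintype V] [DecidableEq V]
    [NonAssocSemiring R] (G : SimpleGraph V) [DecidableRel G.Adj] :
    (G.adjMatrix R * G.adjMatrix R).trace = 2 * #G.edgeFinset := by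
  simp only [Matrix.trace, Matrix.diag, SimpleGraph.adjMatrix_mul_self_apply_self]
  rw [← Nat.cast_sum, G.sum_degrees_eq_twice_card_edges]
  push_cast
  rfl

theorem Finset.sum_le_sum_filter_nonneg {ι M : Type*} [AddCommMonoid M] [LinearOrder M]
    [IsOrderedAddMonoid M] (s : Finset ι) (f : ι → M) :
    ∑ i ∈ s, f i ≤ ∑ i ∈ s with 0 ≤ f i, f i := by
  rw [← sum_filter_add_sum_filter_not s (0 ≤ f ·)]
  exact add_le_of_nonpos_right (sum_nonpos fun i hi => (not_le.1 (mem_filter.1 hi).2).le)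

theorem sum_filter_nonneg_eq_neg_sum_filter_neg {ι : Type*} [Fintype ι] {x : ι → ℝ}
    (hx : ∑ i, x i = 0) :
    ∑ i with 0 ≤ x i, x i = -∑ i with x i < 0, x i := by
  have := sum_filter_add_sum_filter_not univ (0 ≤ x ·) x
  simp only [not_le] at this
  linarith

theorem sq_le_mul_sub_inv {U Q R : ℝ} {a θ : ℕ} (ha : 1 ≤ a) (hR : 0 ≤ R)
    (hUQ : U ^ 2 ≤ a * Q) (hUR : U ^ 2 ≤ θ * R) :
    U ^ 2 ≤ (Q + R) * (a - 1 / (θ + 1)) := by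
  have ha' : (1 : ℝ) ≤ a := by exact_mod_cast ha
  have hθ : (0 : ℝ) ≤ θ := θ.cast_nonneg
  have hQR : 0 ≤ Q + R := by nlinarith
  have hU : (a + θ) * U ^ 2 ≤ a * θ * (Q + R) := by nlinarith
  have hcoef : (a * θ * (θ + 1) : ℝ) ≤ (a * (θ + 1) - 1) * (a + θ) := by
    have ha0 : (0 : ℝ) ≤ a - 1 := sub_nonneg.2 ha'
    nlinarith [mul_nonneg hθ ha0, mul_nonneg (zero_le_one.trans ha') ha0]
  rw [sub_div' (by positivity), ← mul_div_assoc, le_div_iff₀ (by positivity)]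
  nlinarith

theorem sum_le_sqrt_of_sum_eq_zero {ι : Type*} [Fintype ι] {x : ι → ℝ} (hx : ∑ i, x i = 0)
    {s : Finset ι} {k : ℕ} (hs : #s ≤ k) :
    ∑ i ∈ s, x i ≤ √((∑ i, x i ^ 2) * (k - 1 / (#{i | x i < 0} + 1))) := by
  classical
  refine (s.sum_le_sum_filter_nonneg x).trans ?_
  set A := s.filter (0 ≤ x ·)
  set N : Finset ι := {i | x i < 0}
  obtain hA | hA := A.eq_empty_or_nonempty
  · rw [hA, sum_empty]
    exact Real.sqrt_nonneg _
  apply Real.le_sqrt_of_sq_le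
  have hU : 0 ≤ ∑ i ∈ A, x i := sum_nonneg fun i hi => (mem_filter.1 hi).2
  have hUN : ∑ i ∈ A, x i ≤ -∑ i ∈ N, x i := by
    rw [← sum_filter_nonneg_eq_neg_sum_filter_neg hx]
    exact sum_le_sum_of_subset_of_nonneg (monotone_filter_left _ (subset_univ s))
      fun i hi _ => (mem_filter.1 hi).2
  have hAN : Disjoint A N := disjoint_left.2 fun i hiA hiN =>
    (mem_filter.1 hiN).2.not_ge (mem_filter.1 hiA).2
  have hsq : ∑ i ∈ A, x i ^ 2 + ∑ i ∈ N, x i ^ 2 ≤ ∑ i, x i ^ 2 := by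
    rw [← sum_union hAN]
    exact sum_le_univ_sum_of_nonneg fun i => sq_nonneg _
  have hAk : (#A : ℝ) ≤ k := by exact_mod_cast (card_filter_le s _).trans hs
  have hcoef : 0 ≤ (#A : ℝ) - 1 / (#N + 1) := by
    have hA1 : (1 : ℝ) ≤ #A := by exact_mod_cast hA.card_pos
    have hN1 : 1 / ((#N : ℝ) + 1) ≤ 1 := by
      rw [div_le_one₀ (by positivity)]
      exact le_add_of_nonneg_left (#N).cast_nonneg
    linarith
  calc (∑ i ∈ A, x i) ^ 2
      ≤ (∑ i ∈ A, x i ^ 2 + ∑ i ∈ N, x i ^ 2) * (#A - 1 / (#N + 1)) :=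
        sq_le_mul_sub_inv hA.card_pos (sum_nonneg fun i _ => sq_nonneg _) sq_sum_le_card_mul_sum_sq
          ((pow_le_pow_left₀ hU hUN 2).trans (neg_sq (∑ i ∈ N, x i) ▸ sq_sum_le_card_mul_sum_sq))
    _ ≤ (∑ i, x i ^ 2) * (k - 1 / (#N + 1)) :=
        mul_le_mul hsq (by linarith) hcoef (sum_nonneg fun i _ => sq_nonneg _)

theorem stmt9_general {n : ℕ} (G : SimpleGraph (Fin n)) [DecidableRel G.Adj]
    (m : ℕ) (hm : m = G.edgeFinset.card)
    (hA : (G.adjMatrix ℝ).IsHermitian)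
    (lam : Fin n → ℝ) (σ : Equiv.Perm (Fin n))
    (hlam : lam = hA.eigenvalues ∘ σ)
    (θ : ℕ) (hθ : θ = (Finset.univ.filter (fun i => lam i < 0)).card)
    (k : ℕ) :
    ∑ i ∈ Finset.univ.filter (fun i : Fin n => (i : ℕ) < k), lam i ≤
      Real.sqrt (2 * (m : ℝ) * ((k : ℝ) - 1 / ((θ : ℝ) + 1))) := by
  have hsum : ∑ i, lam i = 0 := by
    rw [hlam, Function.comp_def, Equiv.sum_comp σ hA.eigenvalues]
    simpa using hA.trace_eq_sum_eigenvalues.symm.trans (G.trace_adjMatrix (α := ℝ))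
  have hsq : ∑ i, lam i ^ 2 = 2 * m := by
    rw [hlam, Function.comp_def, Equiv.sum_comp σ (hA.eigenvalues · ^ 2), hm]
    simpa using hA.trace_mul_self_eq_sum_sq_eigenvalues.symm.trans G.trace_adjMatrix_mul_self
  have hcard : #{i : Fin n | (i : ℕ) < k} ≤ k := by
    simpa using card_le_card_of_injOn Fin.val (t := range k) (by intro i; simp)
      Fin.val_injective.injOn
  rw [← hsq, hθ]
  exact sum_le_sqrt_of_sum_eq_zero hsum hcard

/-- For a simple graph `G` on `n ≥ 2` vertices with `m ≥ 1` edges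
and `θ` negative adjacency eigenvalues, for every `1 ≤ k ≤ n`,
`∑_{i=1}^k λᵢ(G) ≤ √(2m(k − 1/(θ+1)))`. -/
theorem stmt9 {n : ℕ} (hn : 2 ≤ n) (G : SimpleGraph (Fin n)) [DecidableRel G.Adj]
    (m : ℕ) (hm : m = G.edgeFinset.card) (hm1 : 1 ≤ m)
    (hA : (G.adjMatrix ℝ).IsHermitian)
    (lam : Fin n → ℝ) (σ : Equiv.Perm (Fin n))
    (hlam : lam = hA.eigenvalues ∘ σ) (hdec : Antitone lam)
    (θ : ℕ) (hθ : θ = (Finset.univ.filter (fun i => lam i < 0)).card)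
    (k : ℕ) (hk1 : 1 ≤ k) (hkn : k ≤ n) :
    ∑ i ∈ Finset.univ.filter (fun i : Fin n => (i : ℕ) < k), lam i ≤
      Real.sqrt (2 * (m : ℝ) * ((k : ℝ) - 1 / ((θ : ℝ) + 1))) :=
  stmt9_general G m hm hA lam σ hlam θ hθ k
end

section
/- Let G be a complete multipartite graph K_{n₁,...,n_p} with p ≥ 3 parts and at least two distinct part sizes. Then the adjacency matrix of G has at least four distinct eigenvalues. -/
/-!
Let `A` be the adjacency matrix and `c i` the part sizes. Two vertices in the same part have
equal rows, so `0` is an eigenvalue; if there were at most three distinct eigenvalues, the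
diagonalisable `A` would be annihilated by `x (x - α) (x - β)`. The partition into parts is
equitable: `A Y = Y M` for the part-indicator matrix `Y` and the quotient matrix
`M i j = c j` (`i ≠ j`), `M i i = 0`. As `Y` has a left inverse, `M` satisfies the same
polynomial, and `M = (J - I) diag c` is invertible, so `(M - α) (M - β) = 0`. On the diagonal
this reads `c i (∑ c - c i) = -αβ` for every part, and two parts of different sizes would then
have sizes summing to `∑ c`, leaving no room for a third part.
-/

open Matrix Polynomial Finset

theorem Finset.exists_subset_triple_of_mem_of_card_le_three {α : Type*} [DecidableEq α]
    {s : Finset α} {x : α} (hx : x ∈ s) (hs : #s ≤ 3) : ∃ a b, s ⊆ {x, a, b} := by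
  suffices ∃ a b, s.erase x ⊆ {a, b} by
    obtain ⟨a, b, hab⟩ := this
    exact ⟨a, b, insert_erase hx ▸ insert_subset_insert x hab⟩
  have h2 : #(s.erase x) ≤ 2 := by rw [card_erase_of_mem hx]; omega
  interval_cases h : #(s.erase x)
  · exact ⟨x, x, by simp [card_eq_zero.mp h]⟩
  · obtain ⟨a, ha⟩ := card_eq_one.mp h
    exact ⟨a, a, by simp [ha]⟩
  · obtain ⟨a, b, -, hab⟩ := card_eq_two.mp h
    exact ⟨a, b, hab.subset⟩

theorem Function.Surjective.not_injective_of_card_fiber_ne {V ι : Type*} [Fintype V]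
    [DecidableEq ι] {f : V → ι} (hf : Surjective f) {i j : ι}
    (h : #{v | f v = i} ≠ #{v | f v = j}) : ¬ Injective f := by
  intro hinj
  have hfiber : ∀ k, #{v | f v = k} = 1 := fun k => by
    obtain ⟨v, rfl⟩ := hf k
    exact card_eq_one.mpr ⟨v, by ext w; simp [hinj.eq_iff]⟩
  exact h (by rw [hfiber, hfiber])

theorem eq_of_mul_sum_sub_eq_mul_sum_sub {ι K : Type*} [Fintype ι] [DecidableEq ι] [Field K]
    [LinearOrder K] [IsStrictOrderedRing K] {c : ι → K} (hc : ∀ k, 0 < c k) {i j k : ι}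
    (hij : i ≠ j) (hki : k ≠ i) (hkj : k ≠ j)
    (h : c i * (∑ l, c l - c i) = c j * (∑ l, c l - c j)) : c i = c j := by
  have hsum : c i + c j + c k ≤ ∑ l, c l := by
    have := sum_le_sum_of_subset_of_nonneg (subset_univ {i, j, k}) fun l _ _ => (hc l).le
    rwa [sum_insert (by simp [hij, hki.symm]), sum_insert (by simp [hkj.symm]), sum_singleton,
      ← add_assoc] at this
  have hfactor : (c i - c j) * (∑ l, c l - c i - c j) = 0 := by linear_combination h
  rcases mul_eq_zero.mp hfactor with h | h
  · linarith
  · linarith [hc k]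

namespace Matrix

theorem aeval_mul_eq_mul_aeval {m n R : Type*} [CommSemiring R] [Fintype m] [DecidableEq m]
    [Fintype n] [DecidableEq n] {A : Matrix m m R} {Y : Matrix m n R} {M : Matrix n n R}
    (h : A * Y = Y * M) (q : R[X]) : aeval A q * Y = Y * aeval M q := by
  induction q using Polynomial.induction_on with
  | C a => simp [Algebra.algebraMap_eq_smul_one]
  | add p q hp hq => rw [map_add, map_add, Matrix.add_mul, Matrix.mul_add, hp, hq]
  | monomial k a ih =>
    rw [pow_succ, ← mul_assoc, map_mul (aeval A) _ X, map_mul (aeval M) _ X, aeval_X, aeval_X,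
      Matrix.mul_assoc, h, ← Matrix.mul_assoc, ih, Matrix.mul_assoc]

namespace IsHermitian

variable {n : Type*} [Fintype n] [DecidableEq n] {A : Matrix n n ℝ}

theorem aeval_eq_zero_of_forall_eval_eigenvalues (hA : A.IsHermitian) {q : ℝ[X]}
    (hq : ∀ i, q.eval (hA.eigenvalues i) = 0) : aeval A q = 0 := by
  rw [← cfc_polynomial q A hA.isSelfAdjoint, ← cfc_zero ℝ A]
  refine cfc_congr fun x hx => ?_
  obtain ⟨i, rfl⟩ := hA.spectrum_real_eq_range_eigenvalues ▸ hx
  exact hq i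

theorem exists_aeval_X_mul_eq_zero (hA : A.IsHermitian) (h0 : (0 : ℝ) ∈ spectrum ℝ A)
    (h3 : #(univ.image hA.eigenvalues) ≤ 3) :
    ∃ α β : ℝ, aeval A (X * ((X - C α) * (X - C β))) = 0 := by
  obtain ⟨i₀, hi₀⟩ := hA.spectrum_real_eq_range_eigenvalues ▸ h0
  have hmem : (0 : ℝ) ∈ univ.image hA.eigenvalues := hi₀ ▸ mem_image_of_mem _ (mem_univ i₀)
  obtain ⟨α, β, hsub⟩ := exists_subset_triple_of_mem_of_card_le_three hmem h3
  refine ⟨α, β, hA.aeval_eq_zero_of_forall_eval_eigenvalues fun i => ?_⟩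
  have := hsub (mem_image_of_mem _ (mem_univ i))
  simp only [mem_insert, mem_singleton] at this
  rcases this with h | h | h <;> simp [h]

end IsHermitian

end Matrix

section CompleteMultipartite

variable {V ι R : Type*}

def partitionMatrix [DecidableEq ι] (R : Type*) [Zero R] [One R] (f : V → ι) : Matrix V ι R :=
  of fun v i => if f v = i then 1 else 0

def multipartiteQuotientMatrix [DecidableEq ι] [Zero R] (c : ι → R) : Matrix ι ι R :=
  of fun i j => if i = j then 0 else c j

theorem partitionMatrix_mul_apply [Fintype ι] [DecidableEq ι] [NonAssocSemiring R] {κ : Type*}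
    (f : V → ι) (N : Matrix ι κ R) (v : V) (k : κ) :
    (partitionMatrix R f * N) v k = N (f v) k := by
  simp [partitionMatrix, mul_apply]

theorem eq_zero_of_partitionMatrix_mul_eq_zero [Fintype ι] [DecidableEq ι] [NonAssocSemiring R]
    {κ : Type*} {f : V → ι} (hf : Function.Surjective f) {N : Matrix ι κ R}
    (h : partitionMatrix R f * N = 0) : N = 0 := by
  ext i k
  obtain ⟨v, rfl⟩ := hf i
  simpa [partitionMatrix_mul_apply] using congr_fun₂ h v k

theorem aeval_multipartiteQuotientMatrix_apply_self [Fintype ι] [DecidableEq ι] [CommRing R]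
    (c : ι → R) (a b : R) (i : ι) :
    aeval (multipartiteQuotientMatrix c) ((X - C a) * (X - C b)) i i
      = c i * (∑ k, c k - c i) + a * b := by
  have hdiag : multipartiteQuotientMatrix c i i = 0 := if_pos rfl
  have hsq : (multipartiteQuotientMatrix c * multipartiteQuotientMatrix c) i i
      = c i * (∑ k, c k - c i) := by
    rw [mul_apply, ← sum_erase_add _ _ (mem_univ i), ← sum_erase_add _ _ (mem_univ i),
      add_sub_cancel_right, mul_sum, hdiag, mul_zero, add_zero]
    refine sum_congr rfl fun k hk => ?_
    simp only [multipartiteQuotientMatrix, of_apply, if_neg (ne_of_mem_erase hk).symm,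
      if_neg (ne_of_mem_erase hk), mul_comm]
  simp only [map_mul, aeval_sub, aeval_X, aeval_C, Algebra.algebraMap_eq_smul_one,
    Matrix.mul_sub, Matrix.sub_mul, smul_mul_assoc, mul_smul_comm, Matrix.one_mul, Matrix.mul_one,
    Matrix.sub_apply, Matrix.smul_apply, one_apply_eq, smul_eq_mul, hsq, hdiag]
  ring

theorem isUnit_multipartiteQuotientMatrix [Fintype ι] [DecidableEq ι] {K : Type*} [Field K]
    {c : ι → K} (hι : (Fintype.card ι : K) ≠ 1) (hc : ∀ j, c j ≠ 0) :
    IsUnit (multipartiteQuotientMatrix c) := by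
  set J : Matrix ι ι K := of fun _ _ => 1
  have hfactor : multipartiteQuotientMatrix c = (J - 1) * diagonal c := by
    ext i j
    by_cases h : i = j <;> simp [multipartiteQuotientMatrix, J, one_apply, h]
  have hJ : (J - 1) * (((Fintype.card ι : K) - 1)⁻¹ • J - 1) = 1 := by
    ext i k
    simp only [J, smul_of, mul_apply, Matrix.sub_apply, of_apply, one_apply, Pi.smul_apply,
      smul_eq_mul, mul_one, mul_sub, sub_mul, one_mul, ite_mul, zero_mul, mul_ite, mul_zero,
      sum_sub_distrib, sum_const, card_univ, nsmul_eq_mul, sum_ite_eq, mem_univ, ↓reduceIte,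
      sum_ite_eq']
    rw [← sub_one_mul, mul_inv_cancel₀ (sub_ne_zero.mpr hι)]
    ring
  rw [hfactor]
  exact ((isUnit_iff_isUnit_det _).mpr (isUnit_det_of_right_inverse hJ)).mul
    (isUnit_diagonal.mpr (Pi.isUnit_iff.mpr fun j => (hc j).isUnit))

namespace SimpleGraph

variable {G : SimpleGraph V} [DecidableRel G.Adj] {f : V → ι}

theorem zero_mem_spectrum_adjMatrix [Fintype V] [DecidableEq V] [CommRing R] [Nontrivial R]
    (hG : ∀ v w, G.Adj v w ↔ f v ≠ f w) (hf : ¬ Function.Injective f) :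
    (0 : R) ∈ spectrum R (G.adjMatrix R) := by
  obtain ⟨u, u', h, hne⟩ := Function.not_injective_iff.mp hf
  have hrow : G.adjMatrix R u = G.adjMatrix R u' := by
    ext w
    exact if_congr (by rw [hG, hG, h]) rfl rfl
  rw [spectrum.zero_mem_iff, isUnit_iff_isUnit_det, det_zero_of_row_eq hne hrow]
  exact not_isUnit_zero

theorem adjMatrix_mul_partitionMatrix [Fintype V] [Fintype ι] [DecidableEq ι]
    [NonAssocSemiring R] (hG : ∀ v w, G.Adj v w ↔ f v ≠ f w) :
    G.adjMatrix R * partitionMatrix R f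
      = partitionMatrix R f * multipartiteQuotientMatrix fun j => (#{v | f v = j} : R) := by
  ext v j
  rw [partitionMatrix_mul_apply]
  simp only [partitionMatrix, multipartiteQuotientMatrix, mul_apply, adjMatrix_apply, hG, ne_eq,
    ite_not, of_apply, mul_ite, mul_one, mul_zero]
  rw [← sum_filter, sum_congr rfl fun w hw => by rw [(mem_filter.1 hw).2], sum_const,
    nsmul_eq_mul]
  split_ifs <;> simp

theorem four_le_card_eigenvalues_adjMatrix [Fintype V] [DecidableEq V] [Fintype ι]
    [DecidableEq ι] (hG : ∀ v w, G.Adj v w ↔ f v ≠ f w) (hf : Function.Surjective f)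
    (hι : 3 ≤ Fintype.card ι) (hne : ∃ i j, #{v | f v = i} ≠ #{v | f v = j})
    (hA : (G.adjMatrix ℝ).IsHermitian) : 4 ≤ #(univ.image hA.eigenvalues) := by
  by_contra! h3
  obtain ⟨i, j, hij⟩ := hne
  set c : ι → ℝ := fun l => #{v | f v = l}
  obtain ⟨α, β, hA0⟩ := hA.exists_aeval_X_mul_eq_zero
    (zero_mem_spectrum_adjMatrix hG (hf.not_injective_of_card_fiber_ne hij)) (by omega)
  have hM0 : aeval (multipartiteQuotientMatrix c) (X * ((X - C α) * (X - C β))) = 0 :=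
    eq_zero_of_partitionMatrix_mul_eq_zero hf <| by
      rw [← aeval_mul_eq_mul_aeval (adjMatrix_mul_partitionMatrix hG), hA0, Matrix.zero_mul]
  rw [map_mul, aeval_X] at hM0
  have hc : ∀ k, 0 < c k := fun k => by
    obtain ⟨v, rfl⟩ := hf k
    exact Nat.cast_pos.mpr (card_pos.mpr ⟨v, by simp⟩)
  have hquad := (isUnit_multipartiteQuotientMatrix (by norm_cast; omega) fun k => (hc k).ne')
    |>.mul_right_eq_zero.mp hM0
  have hconst : ∀ k, c k * (∑ l, c l - c k) = -(α * β) := fun k => by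
    have := aeval_multipartiteQuotientMatrix_apply_self c α β k
    rw [hquad, Matrix.zero_apply] at this
    linear_combination -this
  obtain ⟨k, hki, hkj⟩ := ENat.exists_ne_ne_of_three_le (by simpa) i j
  have hij' : i ≠ j := by rintro rfl; exact hij rfl
  exact hij (Nat.cast_injective (R := ℝ)
    (eq_of_mul_sum_sub_eq_mul_sum_sub hc hij' hki hkj ((hconst i).trans (hconst j).symm)))

end SimpleGraph

end CompleteMultipartite

/-- A complete multipartite graph with `p ≥ 3` parts of
(positive) sizes not all equal has at least four distinct adjacency
eigenvalues. -/
theorem stmt13 (p : ℕ) (hp : 3 ≤ p) (nn : Fin p → ℕ) (hpos : ∀ i, 1 ≤ nn i)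
    (hne : ∃ i j, nn i ≠ nn j)
    (G : SimpleGraph (Σ i : Fin p, Fin (nn i))) [DecidableRel G.Adj]
    (hG : ∀ a b, G.Adj a b ↔ a.1 ≠ b.1)
    (hA : (G.adjMatrix ℝ).IsHermitian) :
    4 ≤ (Finset.univ.image hA.eigenvalues).card := by
  have hfiber : ∀ k, #{v : Σ i : Fin p, Fin (nn i) | v.1 = k} = nn k := fun k => by
    rw [← Fintype.card_subtype, Fintype.card_congr (Equiv.sigmaSubtype k), Fintype.card_fin]
  refine SimpleGraph.four_le_card_eigenvalues_adjMatrix hG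
    (Sigma.fst_surjective_iff.mpr fun k => ⟨⟨0, hpos k⟩⟩) (by simpa) ?_ hA
  simpa only [hfiber] using hne
end

section
/- A complete multipartite graph G with p ≥ 2 parts has exactly three distinct adjacency eigenvalues if and only if G is complete bipartite (with both parts nonempty and not both singletons) or G ≅ K_{t,...,t} with p ≥ 3 equal parts of size t ≥ 2. -/
/-!
The adjacency matrix of `K_{n_1,…,n_p}` has two kinds of eigenvectors. Vectors supported on one
part with zero sum give the eigenvalue `0`, present iff some `n_i ≥ 2`. Vectors constant on the
parts reduce to the quotient matrix of the partition, whose eigenvalues are `-n_i` for a part size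
occurring twice and the roots of the secular equation `∑ n_i / (x + n_i) = 1`.

The secular function has a positive root, and since it runs from `+∞` to `-∞` between two
consecutive poles, a root strictly between any two distinct values `-n_j < -n_i`. Hence for
`p ≥ 3` parts of unequal sizes there are four distinct eigenvalues: a positive one, `0`, and two
negative ones (two secular roots, or one secular root and a repeated `-n_i`). In the remaining
cases the spectrum is explicit: `{√(n_1 n_2), 0, -√(n_1 n_2)}` for `p = 2`,
`{(p - 1) t, 0, -t}` for `p` parts of size `t ≥ 2`, and `{p - 1, -1}` for `K_p`.
-/

open Finset Matrix Filter Topology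

lemma Matrix.IsHermitian.mem_image_eigenvalues_iff {m : Type*} [Fintype m] [DecidableEq m]
    {A : Matrix m m ℝ} (hA : A.IsHermitian) {x : ℝ} :
    x ∈ univ.image hA.eigenvalues ↔ ∃ v ≠ 0, A *ᵥ v = x • v := by
  rw [← mem_coe, coe_image, coe_univ, Set.image_univ, ← hA.spectrum_real_eq_range_eigenvalues,
    ← spectrum_toLin', ← Module.End.hasEigenvalue_iff_mem_spectrum, Module.End.hasEigenvalue_iff,
    Submodule.ne_bot_iff]
  simp [and_comm]

namespace CompleteMultipartite

variable {ι : Type*} [Fintype ι]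

noncomputable def secular (n : ι → ℕ) (x : ℝ) : ℝ := ∑ i, (n i : ℝ) / (x + n i)

def IsEigenvalue (n : ι → ℕ) (x : ℝ) : Prop :=
  (x = 0 ∧ ∃ i, 2 ≤ n i) ∨ (∃ i j, i ≠ j ∧ n i = n j ∧ x = -n i) ∨
    ((∀ i, x + n i ≠ 0) ∧ secular n x = 1)

variable {n : ι → ℕ}

lemma secular_zero (hpos : ∀ i, 0 < n i) : secular n 0 = Fintype.card ι := by
  simp [secular, div_self, (hpos _).ne']

lemma continuousOn_secular {s : Set ℝ} (h : ∀ x ∈ s, ∀ i, x + n i ≠ 0) :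
    ContinuousOn (secular n) s :=
  continuousOn_finsetSum _ fun i _ =>
    continuousOn_const.div (continuousOn_id.add continuousOn_const) fun x hx => h x hx i

variable (n) in
lemma tendsto_secular_atTop : Tendsto (secular n) atTop (𝓝 0) := by
  unfold secular
  simpa using tendsto_finsetSum univ fun i _ =>
    tendsto_const_nhds.div_atTop (tendsto_atTop_add_const_right _ (n i : ℝ) tendsto_id)

lemma exists_pos_secular_eq_one (hp : 2 ≤ Fintype.card ι) (hpos : ∀ i, 0 < n i) :
    ∃ x, 0 < x ∧ secular n x = 1 := by
  obtain ⟨N, hN, hN0⟩ := (((tendsto_secular_atTop n).eventually (gt_mem_nhds one_pos)).and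
    (eventually_ge_atTop 0)).exists
  have hcont : ContinuousOn (secular n) (Set.Icc 0 N) :=
    continuousOn_secular fun x hx i => by have := hx.1; have := hpos i; positivity
  have hp' : (2 : ℝ) ≤ Fintype.card ι := by exact_mod_cast hp
  obtain ⟨x, hx, hx1⟩ :=
    intermediate_value_Icc' hN0 hcont ⟨hN.le, by rw [secular_zero hpos]; linarith⟩
  refine ⟨x, hx.1.lt_of_ne ?_, hx1⟩
  rintro rfl
  rw [secular_zero hpos] at hx1
  linarith

/-- Only the first summand blows up at the pole `-n i`. -/
lemma secular_eq_pole_add (i : ι) (x : ℝ) :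
    secular n x = #{j | n j = n i} * (n i / (x + n i)) +
      ∑ j with n j ≠ n i, (n j : ℝ) / (x + n j) := by
  rw [secular, ← sum_filter_add_sum_filter_not univ fun j => n j = n i,
    sum_congr rfl fun j hj => by rw [(mem_filter.1 hj).2], sum_const, nsmul_eq_mul]

lemma tendsto_sum_filter_ne (i : ι) {l : Filter ℝ} (hl : l ≤ 𝓝 (-(n i : ℝ))) :
    Tendsto (fun x => ∑ j with n j ≠ n i, (n j : ℝ) / (x + n j)) l
      (𝓝 (∑ j with n j ≠ n i, (n j : ℝ) / (-n i + n j))) :=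
  tendsto_finsetSum _ fun j hj => by
    have hne : -(n i : ℝ) + n j ≠ 0 := fun h =>
      (mem_filter.1 hj).2 (by exact_mod_cast (neg_add_eq_zero.1 h).symm)
    exact (continuousAt_const.div (continuousAt_id.add continuousAt_const) hne).tendsto.mono_left hl

lemma card_filter_eq_pos (i : ι) : (0 : ℝ) < #{j | n j = n i} := by
  exact_mod_cast card_pos.2 ⟨i, by simp⟩

lemma tendsto_secular_nhdsGT {i : ι} (hi : 0 < n i) :
    Tendsto (secular n) (𝓝[>] (-(n i : ℝ))) atTop := by
  have hshift : Tendsto (fun x : ℝ => x + n i) (𝓝[>] (-(n i : ℝ))) (𝓝[>] 0) := by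
    rw [Tendsto, map_add_right_nhdsGT, neg_add_cancel]
  have hpole : Tendsto (fun x : ℝ => (n i : ℝ) / (x + n i)) (𝓝[>] (-(n i : ℝ))) atTop := by
    simpa [div_eq_mul_inv] using
      (tendsto_inv_nhdsGT_zero.comp hshift).const_mul_atTop (Nat.cast_pos.2 hi)
  rw [funext (secular_eq_pole_add i)]
  exact (hpole.const_mul_atTop (card_filter_eq_pos i)).atTop_add
    (tendsto_sum_filter_ne i nhdsWithin_le_nhds)

lemma tendsto_secular_nhdsLT {i : ι} (hi : 0 < n i) :
    Tendsto (secular n) (𝓝[<] (-(n i : ℝ))) atBot := by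
  have hshift : Tendsto (fun x : ℝ => x + n i) (𝓝[<] (-(n i : ℝ))) (𝓝[<] 0) := by
    rw [Tendsto, map_add_right_nhdsLT, neg_add_cancel]
  have hpole : Tendsto (fun x : ℝ => (n i : ℝ) / (x + n i)) (𝓝[<] (-(n i : ℝ))) atBot := by
    simpa [div_eq_mul_inv] using
      (tendsto_inv_nhdsLT_zero.comp hshift).const_mul_atBot (Nat.cast_pos.2 hi)
  rw [funext (secular_eq_pole_add i)]
  exact (hpole.const_mul_atBot (card_filter_eq_pos i)).atBot_add
    (tendsto_sum_filter_ne i nhdsWithin_le_nhds)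

lemma exists_secular_eq_one_of_gap (hpos : ∀ i, 0 < n i) {i j : ι} (hij : n i < n j)
    (hgap : ∀ k, n k ≤ n i ∨ n j ≤ n k) :
    ∃ x ∈ Set.Ioo (-(n j : ℝ)) (-(n i : ℝ)), (∀ k, x + n k ≠ 0) ∧ secular n x = 1 := by
  have hlt : -(n j : ℝ) < -n i := neg_lt_neg (by exact_mod_cast hij)
  have hden : ∀ x ∈ Set.Ioo (-(n j : ℝ)) (-(n i : ℝ)), ∀ k, x + n k ≠ 0 := by
    intro x hx k
    rcases hgap k with h | h
    · have : (n k : ℝ) ≤ n i := by exact_mod_cast h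
      linarith [hx.2]
    · have : (n j : ℝ) ≤ n k := by exact_mod_cast h
      linarith [hx.1]
  obtain ⟨x, hx, hx1⟩ := (continuousOn_secular hden).surjOn_of_tendsto' (Set.nonempty_Ioo.2 hlt)
    ((tendsto_comp_coe_Ioo_atBot hlt).2 (tendsto_secular_nhdsGT (hpos j)))
    ((tendsto_comp_coe_Ioo_atTop hlt).2 (tendsto_secular_nhdsLT (hpos i))) (Set.mem_univ 1)
  exact ⟨x, hx, hden x hx, hx1⟩

section Matrix

variable [DecidableEq ι] (n)

def adjMatrix : Matrix (Σ i, Fin (n i)) (Σ i, Fin (n i)) ℝ :=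
  of fun a b => if a.1 = b.1 then 0 else 1

lemma adjMatrix_mulVec_apply (v : (Σ i, Fin (n i)) → ℝ) (a : Σ i, Fin (n i)) :
    (adjMatrix n *ᵥ v) a = ∑ i, ∑ k, v ⟨i, k⟩ - ∑ k, v ⟨a.1, k⟩ := by
  have hrow : ∀ b : Σ i, Fin (n i),
      (if a.1 = b.1 then 0 else 1) * v b = v b - if a.1 = b.1 then v b else 0 := by
    intro b; split_ifs <;> ring
  simp only [mulVec, dotProduct, adjMatrix, of_apply, hrow, sum_sub_distrib, Fintype.sum_sigma]
  congr 1
  rw [Fintype.sum_eq_single a.1 fun j hj => by simp [Ne.symm hj]]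
  simp

lemma adjMatrix_mulVec_comp_fst (c : ι → ℝ) (a : Σ i, Fin (n i)) :
    (adjMatrix n *ᵥ fun b => c b.1) a = ∑ j, n j * c j - n a.1 * c a.1 := by
  simp [adjMatrix_mulVec_apply]

variable {n}

/-- `c i * (x + n i) = ∑ j, n j * c j` is the eigen-equation of the quotient matrix
`fun i j => if i = j then 0 else n j` of the partition. -/
lemma exists_eigenvector_of_quotient_eigenvector (hpos : ∀ i, 0 < n i) {x : ℝ} {c : ι → ℝ}
    (hc : c ≠ 0) (h : ∀ i, c i * (x + n i) = ∑ j, n j * c j) :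
    ∃ v ≠ 0, adjMatrix n *ᵥ v = x • v := by
  refine ⟨fun b => c b.1, fun hv => hc (funext fun i => ?_), funext fun a => ?_⟩
  · simpa using congrFun hv ⟨i, ⟨0, hpos i⟩⟩
  · rw [adjMatrix_mulVec_comp_fst, ← h]
    simp only [Pi.smul_apply, smul_eq_mul]
    ring

lemma exists_quotient_eigenvector_of_eigenvector {x : ℝ} (hx : x ≠ 0) {v : (Σ i, Fin (n i)) → ℝ}
    (hv : v ≠ 0) (h : adjMatrix n *ᵥ v = x • v) :
    ∃ c : ι → ℝ, c ≠ 0 ∧ ∀ i, c i * (x + n i) = ∑ j, n j * c j := by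
  set T : ι → ℝ := fun i => ∑ k, v ⟨i, k⟩
  set c : ι → ℝ := fun i => (∑ j, T j - T i) / x
  have hvc : ∀ a, v a = c a.1 := fun a => by
    rw [eq_div_iff hx, ← adjMatrix_mulVec_apply, h, Pi.smul_apply, smul_eq_mul, mul_comm]
  have hT : ∀ i, T i = n i * c i := fun i => by simp [T, hvc]
  refine ⟨c, fun hc => hv (funext fun a => by rw [hvc a, hc]; rfl), fun i => ?_⟩
  have hci : c i * x = ∑ j, T j - T i := div_mul_cancel₀ _ hx
  simp only [hT] at hci
  linarith

lemma exists_mulVec_eq_zero_iff (hp : 2 ≤ Fintype.card ι) (hpos : ∀ i, 0 < n i) :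
    (∃ v ≠ 0, adjMatrix n *ᵥ v = 0) ↔ ∃ i, 2 ≤ n i := by
  constructor
  · rintro ⟨v, hv, h⟩
    by_contra! hsmall
    set T : ι → ℝ := fun i => ∑ k, v ⟨i, k⟩
    have hT : ∀ i, T i = ∑ j, T j := fun i => by
      have := congrFun h ⟨i, ⟨0, hpos i⟩⟩
      rw [adjMatrix_mulVec_apply, Pi.zero_apply, sub_eq_zero] at this
      exact this.symm
    have hsum : ∑ j, T j = 0 := by
      have : ∑ j, T j = Fintype.card ι * ∑ j, T j := by
        conv_lhs => rw [sum_congr rfl fun i _ => hT i]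
        simp
      have hp' : (2 : ℝ) ≤ Fintype.card ι := by exact_mod_cast hp
      nlinarith
    refine hv (funext fun a => ?_)
    have : Subsingleton (Fin (n a.1)) :=
      Fin.subsingleton_iff_le_one.2 (by have := hsmall a.1; omega)
    rw [Pi.zero_apply, ← Fintype.sum_subsingleton (fun k => v ⟨a.1, k⟩) a.2]
    exact (hT a.1).trans hsum
  · rintro ⟨i, hi⟩
    set a : Σ i, Fin (n i) := ⟨i, ⟨0, by omega⟩⟩
    set b : Σ i, Fin (n i) := ⟨i, ⟨1, hi⟩⟩
    have hab : a ≠ b := by simp [a, b]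
    refine ⟨Pi.single a 1 - Pi.single b 1, sub_ne_zero.2 fun h => ?_, ?_⟩
    · simpa [hab] using congrFun h a
    · rw [mulVec_sub]
      funext x
      simp [adjMatrix, a, b]

lemma exists_quotient_eigenvector_iff (hpos : ∀ i, 0 < n i) (x : ℝ) :
    (∃ c : ι → ℝ, c ≠ 0 ∧ ∀ i, c i * (x + n i) = ∑ j, n j * c j) ↔
      (∃ i j, i ≠ j ∧ n i = n j ∧ x = -n i) ∨ ((∀ i, x + n i ≠ 0) ∧ secular n x = 1) := by
  constructor
  · rintro ⟨c, hc, h⟩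
    set S := ∑ j, (n j : ℝ) * c j
    obtain ⟨i, hi⟩ := Function.ne_iff.1 hc
    by_cases hS : S = 0
    · have hpole : ∀ j, c j ≠ 0 → x = -n j := fun j hj => by
        have := h j
        rw [hS] at this
        linarith [(mul_eq_zero.1 this).resolve_left hj]
      obtain ⟨j, hji, hj⟩ : ∃ j, j ≠ i ∧ c j ≠ 0 := by
        by_contra! hzero
        have hSi : S = n i * c i :=
          Fintype.sum_eq_single i fun j hj => by rw [hzero j hj, mul_zero]
        exact mul_ne_zero (Nat.cast_ne_zero.2 (hpos i).ne') hi (hSi ▸ hS)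
      refine Or.inl ⟨i, j, hji.symm, ?_, hpole i hi⟩
      exact_mod_cast neg_inj.1 ((hpole i hi).symm.trans (hpole j hj))
    · have hden : ∀ j, x + n j ≠ 0 := fun j hj => hS (by rw [← h j, hj, mul_zero])
      refine Or.inr ⟨hden, mul_left_cancel₀ hS ?_⟩
      calc S * secular n x = ∑ j, (n j : ℝ) * (S / (x + n j)) := by
            simp only [secular, mul_sum]; congr 1; ext j; ring
        _ = S * 1 := by
            rw [mul_one]
            exact sum_congr rfl fun j _ => by rw [← h j, mul_div_cancel_right₀ _ (hden j)]
  · rintro (⟨i, j, hij, hn, rfl⟩ | ⟨hden, hsec⟩)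
    · refine ⟨Pi.single i 1 - Pi.single j 1, sub_ne_zero.2 fun h => ?_, fun k => ?_⟩
      · simpa [hij] using congrFun h i
      · by_cases hki : k = i <;> by_cases hkj : k = j <;>
          simp [Pi.single_apply, mul_sub, sum_sub_distrib, hki, hkj, hij, hn]
    · obtain ⟨i⟩ : Nonempty ι := by
        by_contra h
        rw [not_nonempty_iff] at h
        simp [secular] at hsec
      refine ⟨fun i => 1 / (x + n i), Function.ne_iff.2 ⟨i, one_div_ne_zero (hden i)⟩,
        fun k => ?_⟩
      rw [one_div_mul_cancel (hden k)]
      simpa only [secular, mul_one_div] using hsec.symm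

lemma exists_eigenvector_iff (hp : 2 ≤ Fintype.card ι) (hpos : ∀ i, 0 < n i) (x : ℝ) :
    (∃ v ≠ 0, adjMatrix n *ᵥ v = x • v) ↔ IsEigenvalue n x := by
  rcases eq_or_ne x 0 with rfl | hx
  · have hrep : ¬∃ i j, i ≠ j ∧ n i = n j ∧ (0 : ℝ) = -n i := fun ⟨i, _, _, _, h⟩ =>
      (hpos i).ne' (by exact_mod_cast neg_eq_zero.1 h.symm)
    have hsec : secular n 0 ≠ 1 := by
      rw [secular_zero hpos]
      exact_mod_cast (by omega : Fintype.card ι ≠ 1)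
    simp only [IsEigenvalue, zero_smul, exists_mulVec_eq_zero_iff hp hpos, true_and, hrep, hsec,
      and_false, or_false]
  · rw [IsEigenvalue, ← exists_quotient_eigenvector_iff hpos]
    simp only [hx, false_and, false_or]
    exact ⟨fun ⟨v, hv, h⟩ => exists_quotient_eigenvector_of_eigenvector hx hv h,
      fun ⟨c, hc, h⟩ => exists_eigenvector_of_quotient_eigenvector hpos hc h⟩

end Matrix

lemma exists_isEigenvalue_mem_Ioo (hpos : ∀ i, 0 < n i) {i j : ι} (hij : n i < n j) :
    ∃ x ∈ Set.Ioo (-(n j : ℝ)) (-n i), IsEigenvalue n x := by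
  obtain ⟨i', hi', hmax⟩ := exists_max_image {k | n k < n j} n ⟨i, by simpa using hij⟩
  rw [mem_filter] at hi'
  have hgap : ∀ k, n k ≤ n i' ∨ n j ≤ n k := fun k =>
    (lt_or_ge (n k) (n j)).imp (fun h => hmax k (by simpa using h)) id
  have hii' : (n i : ℝ) ≤ n i' := by exact_mod_cast hmax i (by simpa using hij)
  obtain ⟨x, hx, hden, hx1⟩ := exists_secular_eq_one_of_gap hpos hi'.2 hgap
  exact ⟨x, ⟨hx.1, by linarith [hx.2]⟩, Or.inr (Or.inr ⟨hden, hx1⟩)⟩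

lemma exists_two_neg_isEigenvalue (hpos : ∀ i, 0 < n i) {i j k : ι} (hij : n i < n j)
    (hki : k ≠ i) (hkj : k ≠ j) :
    ∃ y z, y < 0 ∧ z < 0 ∧ y ≠ z ∧ IsEigenvalue n y ∧ IsEigenvalue n z := by
  have hneg : ∀ l, -(n l : ℝ) < 0 := fun l => neg_neg_of_pos (Nat.cast_pos.2 (hpos l))
  obtain ⟨x, hx, hxe⟩ := exists_isEigenvalue_mem_Ioo hpos hij
  rcases lt_trichotomy (n k) (n i) with hk | hk | hk
  · obtain ⟨y, hy, hye⟩ := exists_isEigenvalue_mem_Ioo hpos hk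
    exact ⟨y, x, hy.2.trans (hneg k), hx.2.trans (hneg i), (hx.2.trans hy.1).ne', hye, hxe⟩
  · refine ⟨-n k, x, hneg k, hx.2.trans (hneg i), ?_, Or.inr (Or.inl ⟨k, i, hki, hk, rfl⟩), hxe⟩
    rw [hk]
    exact hx.2.ne'
  rcases lt_trichotomy (n k) (n j) with hk' | hk' | hk'
  · obtain ⟨y, hy, hye⟩ := exists_isEigenvalue_mem_Ioo hpos hk
    obtain ⟨z, hz, hze⟩ := exists_isEigenvalue_mem_Ioo hpos hk'
    exact ⟨y, z, hy.2.trans (hneg i), hz.2.trans (hneg k), (hz.2.trans hy.1).ne', hye, hze⟩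
  · refine ⟨-n k, x, hneg k, hx.2.trans (hneg i), ?_, Or.inr (Or.inl ⟨k, j, hkj, hk', rfl⟩), hxe⟩
    rw [hk']
    exact hx.1.ne
  · obtain ⟨y, hy, hye⟩ := exists_isEigenvalue_mem_Ioo hpos hk'
    exact ⟨x, y, hx.2.trans (hneg i), hy.2.trans (hneg j), (hy.2.trans hx.1).ne', hxe, hye⟩

lemma three_lt_card_of_isEigenvalue (hp : 3 ≤ Fintype.card ι) (hpos : ∀ i, 0 < n i)
    (hne : ∃ i j, n i ≠ n j) {s : Finset ℝ} (hs : ∀ x, x ∈ s ↔ IsEigenvalue n x) :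
    3 < #s := by
  obtain ⟨i, j, hij⟩ : ∃ i j, n i < n j := by
    obtain ⟨i, j, h⟩ := hne
    exact h.lt_or_gt.elim (fun h => ⟨i, j, h⟩) fun h => ⟨j, i, h⟩
  classical
  have hji : j ≠ i := by rintro rfl; exact lt_irrefl _ hij
  obtain ⟨k, hk⟩ : ((univ.erase i).erase j).Nonempty := by
    rw [← card_pos, card_erase_of_mem (mem_erase.2 ⟨hji, mem_univ j⟩),
      card_erase_of_mem (mem_univ i), card_univ]
    omega
  simp only [mem_erase, mem_univ, and_true] at hk
  obtain ⟨u, hu, hue⟩ := exists_pos_secular_eq_one (by omega) hpos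
  obtain ⟨y, z, hy, hz, hyz, hye, hze⟩ := exists_two_neg_isEigenvalue hpos hij hk.2 hk.1
  have h0 : IsEigenvalue n 0 := Or.inl ⟨rfl, j, by have := hpos i; omega⟩
  have hu' : IsEigenvalue n u := Or.inr (Or.inr ⟨fun l => by positivity, hue⟩)
  rw [three_lt_card]
  exact ⟨u, (hs u).2 hu', 0, (hs 0).2 h0, y, (hs y).2 hye, z, (hs z).2 hze, hu.ne',
    (hy.trans hu).ne', (hz.trans hu).ne', hy.ne', hz.ne', hyz⟩

lemma isEigenvalue_const_iff (hp : 2 ≤ Fintype.card ι) {t : ℕ} (ht : 0 < t) (x : ℝ) :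
    IsEigenvalue (fun _ : ι => t) x ↔
      x = (Fintype.card ι - 1) * t ∨ (2 ≤ t ∧ x = 0) ∨ x = -t := by
  obtain ⟨i, j, hij⟩ := Fintype.exists_pair_of_one_lt_card hp
  have hsec : ∀ y, secular (fun _ : ι => t) y = Fintype.card ι * (t / (y + t)) := by
    simp [secular]
  have hp0 : (0 : ℝ) < Fintype.card ι := by exact_mod_cast Fintype.card_pos_iff.2 ⟨i⟩
  have ht0 : (0 : ℝ) < t := Nat.cast_pos.2 ht
  simp only [IsEigenvalue, hsec]
  constructor
  · rintro (⟨rfl, -, h⟩ | ⟨-, -, -, -, rfl⟩ | ⟨hden, h⟩)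
    · exact Or.inr (Or.inl ⟨h, rfl⟩)
    · exact Or.inr (Or.inr rfl)
    · left
      field_simp [hden i] at h
      linarith
  · rintro (rfl | ⟨h, rfl⟩ | rfl)
    · have hden : ((Fintype.card ι : ℝ) - 1) * t + t = Fintype.card ι * t := by ring
      refine Or.inr (Or.inr ⟨fun _ => by rw [hden]; positivity, ?_⟩)
      rw [hden]
      field_simp
    · exact Or.inl ⟨rfl, i, h⟩
    · exact Or.inr (Or.inl ⟨i, j, hij, trivial, rfl⟩)

lemma isEigenvalue_fin_two_iff {n : Fin 2 → ℕ} (hpos : ∀ i, 0 < n i) (hne : ¬∀ i, n i = 1)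
    (x : ℝ) :
    IsEigenvalue n x ↔ x = √(n 0 * n 1) ∨ x = 0 ∨ x = -√(n 0 * n 1) := by
  set r := √((n 0 : ℝ) * n 1)
  have ha : (0 : ℝ) < n 0 := Nat.cast_pos.2 (hpos 0)
  have hb : (0 : ℝ) < n 1 := Nat.cast_pos.2 (hpos 1)
  have hr : r ^ 2 = n 0 * n 1 := Real.sq_sqrt (by positivity)
  have hr0 : 0 < r := Real.sqrt_pos.2 (by positivity)
  have hsec : ∀ y : ℝ, y + n 0 ≠ 0 → y + n 1 ≠ 0 → (secular n y = 1 ↔ y ^ 2 = r ^ 2) := by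
    intro y h0 h1
    rw [secular, Fin.sum_univ_two, div_add_div _ _ h0 h1, div_eq_one_iff_eq (mul_ne_zero h0 h1),
      hr]
    constructor <;> intro h <;> linarith
  have hr_of_eq : n 0 = n 1 → r = n 0 := fun h => by
    rw [show r = √((n 0 : ℝ) * n 0) by simp only [r, h], Real.sqrt_mul_self ha.le]
  simp only [IsEigenvalue, Fin.forall_fin_two]
  constructor
  · rintro (⟨rfl, -⟩ | ⟨i, j, hij, hn, rfl⟩ | ⟨⟨h0, h1⟩, h⟩)
    · exact Or.inr (Or.inl rfl)
    · have h01 : n 0 = n 1 := by fin_cases i <;> fin_cases j <;> simp_all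
      refine Or.inr (Or.inr ?_)
      rw [hr_of_eq h01]
      fin_cases i <;> simp [h01]
    · rcases sq_eq_sq_iff_eq_or_eq_neg.1 ((hsec x h0 h1).1 h) with h | h
      exacts [Or.inl h, Or.inr (Or.inr h)]
  · rintro (rfl | rfl | rfl)
    · have h0 : r + n 0 ≠ 0 := by positivity
      have h1 : r + n 1 ≠ 0 := by positivity
      exact Or.inr (Or.inr ⟨⟨h0, h1⟩, (hsec r h0 h1).2 rfl⟩)
    · obtain ⟨i, hi⟩ := not_forall.1 hne
      exact Or.inl ⟨rfl, i, by have := hpos i; omega⟩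
    · by_cases h01 : n 0 = n 1
      · exact Or.inr (Or.inl ⟨0, 1, by decide, h01, by rw [hr_of_eq h01]⟩)
      · have h01' : (n 0 : ℝ) ≠ n 1 := by exact_mod_cast h01
        have h0 : -r + n 0 ≠ 0 := fun h => h01' (mul_left_cancel₀ ha.ne' (by
          rw [← hr, show r = n 0 by linarith]; ring))
        have h1 : -r + n 1 ≠ 0 := fun h => h01' (mul_right_cancel₀ hb.ne' (by
          rw [← hr, show r = n 1 by linarith]; ring))
        exact Or.inr (Or.inr ⟨⟨h0, h1⟩, (hsec _ h0 h1).2 (neg_sq r)⟩)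

section Card

variable {s : Finset ℝ}

lemma card_eq_two_of_forall_eq_one (hp : 2 ≤ Fintype.card ι) (h : ∀ i, n i = 1)
    (hs : ∀ x, x ∈ s ↔ IsEigenvalue n x) : #s = 2 := by
  obtain rfl : n = fun _ => 1 := funext h
  have hp' : (2 : ℝ) ≤ Fintype.card ι := by exact_mod_cast hp
  rw [card_eq_two]
  exact ⟨Fintype.card ι - 1, -1, by linarith,
    ext fun x => by simp [hs, isEigenvalue_const_iff hp one_pos]⟩

lemma card_eq_three_of_forall_eq (hp : 2 ≤ Fintype.card ι) {t : ℕ} (ht : 2 ≤ t)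
    (h : ∀ i, n i = t) (hs : ∀ x, x ∈ s ↔ IsEigenvalue n x) : #s = 3 := by
  obtain rfl : n = fun _ => t := funext h
  have hp' : (2 : ℝ) ≤ Fintype.card ι := by exact_mod_cast hp
  have ht' : (2 : ℝ) ≤ t := by exact_mod_cast ht
  have hpos : (0 : ℝ) < (Fintype.card ι - 1) * t := by nlinarith
  rw [card_eq_three]
  exact ⟨(Fintype.card ι - 1) * t, 0, -t, hpos.ne', by linarith, by linarith,
    ext fun x => by simp [hs, isEigenvalue_const_iff hp (by omega : 0 < t), ht]⟩

lemma card_eq_three_of_fin_two {n : Fin 2 → ℕ} (hpos : ∀ i, 0 < n i) (hne : ¬∀ i, n i = 1)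
    (hs : ∀ x, x ∈ s ↔ IsEigenvalue n x) : #s = 3 := by
  have hr : 0 < √((n 0 : ℝ) * n 1) := by
    have := hpos 0
    have := hpos 1
    positivity
  rw [card_eq_three]
  exact ⟨√(n 0 * n 1), 0, -√(n 0 * n 1), hr.ne', by linarith, by linarith,
    ext fun x => by
      simp only [hs, isEigenvalue_fin_two_iff hpos hne, mem_insert, mem_singleton]⟩

end Card

end CompleteMultipartite

open CompleteMultipartite in
/-- A complete multipartite graph with `p ≥ 2` parts of positive
sizes has exactly three distinct adjacency eigenvalues iff it is complete
bipartite (not both parts singletons) or has `p ≥ 3` equal parts of size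
`t ≥ 2`. -/
theorem stmt14 (p : ℕ) (hp : 2 ≤ p) (nn : Fin p → ℕ) (hpos : ∀ i, 1 ≤ nn i)
    (G : SimpleGraph (Σ i : Fin p, Fin (nn i))) [DecidableRel G.Adj]
    (hG : ∀ a b, G.Adj a b ↔ a.1 ≠ b.1)
    (hA : (G.adjMatrix ℝ).IsHermitian) :
    (Finset.univ.image hA.eigenvalues).card = 3 ↔
      (p = 2 ∧ ¬(∀ i, nn i = 1)) ∨
        (3 ≤ p ∧ ∃ t, 2 ≤ t ∧ ∀ i, nn i = t) := by
  have hp' : 2 ≤ Fintype.card (Fin p) := by rwa [Fintype.card_fin]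
  have hadj : G.adjMatrix ℝ = adjMatrix nn := by
    ext a b
    simp [adjMatrix, SimpleGraph.adjMatrix_apply, hG]
  have key : ∀ x, x ∈ univ.image hA.eigenvalues ↔ IsEigenvalue nn x := fun x => by
    rw [hA.mem_image_eigenvalues_iff, hadj, exists_eigenvector_iff hp' hpos]
  constructor
  · intro h3
    rcases hp.eq_or_lt with rfl | hp3
    · refine Or.inl ⟨rfl, fun h1 => ?_⟩
      have := card_eq_two_of_forall_eq_one hp' h1 key
      omega
    refine Or.inr ⟨hp3, ?_⟩
    by_cases hconst : ∀ i, nn i = nn ⟨0, by omega⟩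
    · refine ⟨_, ?_, hconst⟩
      by_contra ht
      have hone : ∀ i, nn i = 1 := fun i => by have := hpos i; have := hconst i; omega
      have := card_eq_two_of_forall_eq_one hp' hone key
      omega
    · obtain ⟨i, hi⟩ := not_forall.1 hconst
      have := three_lt_card_of_isEigenvalue (by rwa [Fintype.card_fin]) hpos ⟨i, _, hi⟩ key
      omega
  · rintro (⟨rfl, hne⟩ | ⟨-, t, ht, hall⟩)
    · exact card_eq_three_of_fin_two hpos hne key
    · exact card_eq_three_of_forall_eq hp' ht hall key
end

section
/- Let G be a graph of order n with m edges and degrees d₁,...,dₙ. Then Σ_{i=1}^{n} dᵢ² ≤ 2m²/(n−1) + (n−2)m. -/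
set_option maxHeartbeats 1000000

lemma decaen_core : ∀ (n : ℕ), 2 ≤ n → ∀ (x : Fin n → Fin n → ℝ),
    (∀ a b, x a b = 0 ∨ x a b = 1) → (∀ a b, x a b = x b a) → (∀ a, x a a = 0) →
    ∀ M : ℝ, 2 * M = ∑ a, ∑ b, x a b →
    ∑ a, (∑ b, x a b) ^ 2 ≤ 2 * M ^ 2 / ((n : ℝ) - 1) + ((n : ℝ) - 2) * M := by
  intro n
  induction n using Nat.strong_induction_on with
  | _ n IH =>
  intro hn x hx01 hsymm hdiag M hM
  rcases lt_or_ge n 5 with h5 | h5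
  · interval_cases n
    · -- n = 2
      have hM' : M = (∑ a, ∑ b, x a b) / 2 := by linarith
      subst hM'
      simp only [Fin.sum_univ_two]
      rw [hdiag 0, hdiag 1, hsymm 1 0]
      rcases hx01 0 1 with h|h <;> rw [h] <;> norm_num
    · -- n = 3
      have hM' : M = (∑ a, ∑ b, x a b) / 2 := by linarith
      subst hM'
      simp only [Fin.sum_univ_three]
      rw [hdiag 0, hdiag 1, hdiag 2, hsymm 1 0, hsymm 2 0, hsymm 2 1]
      rcases hx01 0 1 with h|h <;> rcases hx01 0 2 with h2|h2 <;> rcases hx01 1 2 with h3|h3 <;>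
        rw [h, h2, h3] <;> norm_num
    · -- n = 4
      have hM' : M = (∑ a, ∑ b, x a b) / 2 := by linarith
      subst hM'
      simp only [Fin.sum_univ_four]
      rw [hdiag 0, hdiag 1, hdiag 2, hdiag 3, hsymm 1 0, hsymm 2 0, hsymm 2 1, hsymm 3 0,
        hsymm 3 1, hsymm 3 2]
      rcases hx01 0 1 with h1|h1 <;> rcases hx01 0 2 with h2|h2 <;> rcases hx01 0 3 with h3|h3 <;>
        rcases hx01 1 2 with h4|h4 <;> rcases hx01 1 3 with h5|h5 <;> rcases hx01 2 3 with h6|h6 <;>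
        rw [h1, h2, h3, h4, h5, h6] <;> norm_num
  · -- induction step: n = k + 4 + 1
    obtain ⟨k, rfl⟩ : ∃ k, n = k + 4 + 1 := ⟨n - 5, by omega⟩
    set D : Fin (k + 4 + 1) → ℝ := fun a => ∑ b, x a b with hD
    set S : ℝ := ∑ a, D a ^ 2 with hS
    have hDa : ∀ a, D a = ∑ b, x a b := fun a => rfl
    have hS' : ∑ a, D a ^ 2 = S := rfl
    have hsq : ∀ a b, x a b ^ 2 = x a b := by
      intro a b; rcases hx01 a b with h|h <;> rw [h] <;> norm_num
    have hcol : ∀ j, ∑ i, x i j = D j := by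
      intro j; rw [hDa]; exact Finset.sum_congr rfl fun i _ => hsymm i j
    have hDsum : ∑ i, D i = 2 * M := hM.symm
    have key : ∀ i : Fin (k + 4 + 1),
        S - 2 * (∑ j, x i j * D j) + D i - D i ^ 2 ≤
          2 * (M - D i) ^ 2 / ((k : ℝ) + 3) + ((k : ℝ) + 2) * (M - D i) := by
      intro i
      have hrow : ∀ a : Fin (k + 4), ∑ b, x (i.succAbove a) (i.succAbove b)
          = D (i.succAbove a) - x i (i.succAbove a) := by
        intro a
        have h := Fin.sum_univ_succAbove (fun b => x (i.succAbove a) b) i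
        rw [hDa, h, hsymm (i.succAbove a) i]; ring
      have hM2 : 2 * (M - D i) = ∑ a : Fin (k + 4), ∑ b, x (i.succAbove a) (i.succAbove b) := by
        rw [Finset.sum_congr rfl fun a _ => hrow a, Finset.sum_sub_distrib]
        have e2 := Fin.sum_univ_succAbove (fun j => D j) i
        have e3 := Fin.sum_univ_succAbove (fun j => x i j) i
        simp only [hDsum] at e2
        rw [hdiag i] at e3
        have hDi := hDa i
        rw [Fin.sum_univ_succAbove (fun j => x i j) i, hdiag i] at hDi
        have h1 : ∑ a : Fin (k + 4), D (i.succAbove a) = 2 * M - D i := by linarith [e2]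
        have h2 : ∑ a : Fin (k + 4), x i (i.succAbove a) = D i := by linarith [hDi]
        rw [h1, h2]; ring
      have hIH := IH (k + 4) (by omega) (by omega)
        (fun a b => x (i.succAbove a) (i.succAbove b))
        (fun a b => hx01 _ _) (fun a b => hsymm _ _) (fun a => hdiag _)
        (M - D i) hM2
      have hcast : ((k + 4 : ℕ) : ℝ) - 1 = (k : ℝ) + 3 := by push_cast; ring
      have hcast2 : ((k + 4 : ℕ) : ℝ) - 2 = (k : ℝ) + 2 := by push_cast; ring
      rw [hcast, hcast2] at hIH
      have hlhs : ∑ a : Fin (k + 4), (∑ b, x (i.succAbove a) (i.succAbove b)) ^ 2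
          = S - 2 * (∑ j, x i j * D j) + D i - D i ^ 2 := by
        rw [Finset.sum_congr rfl fun a _ => by rw [hrow a]]
        have e2 := Fin.sum_univ_succAbove (fun j => (D j - x i j) ^ 2) i
        have e3 : ∑ j, (D j - x i j) ^ 2
            = S - 2 * (∑ j, x i j * D j) + D i := by
          have hpt : ∀ j, (D j - x i j) ^ 2 = D j ^ 2 - 2 * (x i j * D j) + x i j := by
            intro j; nlinarith [hsq i j]
          rw [Finset.sum_congr rfl fun j _ => hpt j, Finset.sum_add_distrib,
            Finset.sum_sub_distrib, ← Finset.mul_sum, hS', ← hDa i]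
        have e4 : (D i - x i i) ^ 2 = D i ^ 2 := by rw [hdiag i]; ring
        have := e2
        rw [e3, e4] at this
        linarith [this]
      rw [← hlhs]
      exact hIH
    have hsum := Finset.sum_le_sum (fun i (_ : i ∈ Finset.univ) => key i)
    have hT : ∑ i, ∑ j, x i j * D j = S := by
      rw [Finset.sum_comm, hS]
      refine Finset.sum_congr rfl fun j _ => ?_
      rw [← Finset.sum_mul, hcol j]; ring
    have hlhs : ∑ i, (S - 2 * (∑ j, x i j * D j) + D i - D i ^ 2)
        = ((k : ℝ) + 2) * S + 2 * M := by
      simp only [Finset.sum_sub_distrib, Finset.sum_add_distrib, Finset.sum_const,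
        Finset.card_univ, Fintype.card_fin, nsmul_eq_mul, ← Finset.mul_sum]
      rw [hT, hDsum, hS']
      push_cast; ring
    have hrhs : ∑ i, (2 * (M - D i) ^ 2 / ((k : ℝ) + 3) + ((k : ℝ) + 2) * (M - D i))
        = 2 * (((k : ℝ) + 1) * M ^ 2 + S) / ((k : ℝ) + 3)
          + ((k : ℝ) + 2) * (((k : ℝ) + 3) * M) := by
      have e1 : ∑ i, (M - D i) ^ 2 = ((k : ℝ) + 1) * M ^ 2 + S := by
        rw [Finset.sum_congr rfl fun i (_ : i ∈ Finset.univ) =>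
          (by ring : (M - D i) ^ 2 = M ^ 2 - 2 * M * D i + D i ^ 2), Finset.sum_add_distrib,
          Finset.sum_sub_distrib, ← Finset.mul_sum, hDsum, hS', Finset.sum_const,
          Finset.card_univ, Fintype.card_fin, nsmul_eq_mul]
        push_cast; ring
      have e2 : ∑ i, (M - D i) = ((k : ℝ) + 3) * M := by
        rw [Finset.sum_sub_distrib, hDsum, Finset.sum_const, Finset.card_univ,
          Fintype.card_fin, nsmul_eq_mul]
        push_cast; ring
      rw [Finset.sum_add_distrib, ← Finset.sum_div, ← Finset.mul_sum, ← Finset.mul_sum, e1, e2]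
    rw [hlhs, hrhs] at hsum
    have hk3 : (0 : ℝ) < (k : ℝ) + 3 := by positivity
    have hk4 : (0 : ℝ) < (k : ℝ) + 4 := by positivity
    have hk1 : (0 : ℝ) < (k : ℝ) + 1 := by positivity
    have h2 : ((k : ℝ) + 2) * S + 2 * M - ((k : ℝ) + 2) * (((k : ℝ) + 3) * M)
        ≤ 2 * (((k : ℝ) + 1) * M ^ 2 + S) / ((k : ℝ) + 3) := by linarith
    have h3 := (le_div_iff₀ hk3).mp h2
    have final : S ≤ 2 * M ^ 2 / ((k : ℝ) + 4) + ((k : ℝ) + 3) * M := by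
      rw [div_add' _ _ _ (ne_of_gt hk4), le_div_iff₀ hk4]
      nlinarith [h3, mul_pos hk1 hk4, sq_nonneg M]
    calc S ≤ 2 * M ^ 2 / ((k : ℝ) + 4) + ((k : ℝ) + 3) * M := final
      _ = 2 * M ^ 2 / (((k + 4 + 1 : ℕ) : ℝ) - 1) + (((k + 4 + 1 : ℕ) : ℝ) - 2) * M := by
          push_cast; ring_nf

/-- de Caen's inequality: For a simple graph on `n ≥ 2`
vertices with `m` edges, `∑ dᵢ² ≤ 2m²/(n−1) + (n−2)m`. -/
theorem stmt17 {n : ℕ} (hn : 2 ≤ n) (G : SimpleGraph (Fin n)) [DecidableRel G.Adj]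
    (m : ℕ) (hm : m = G.edgeFinset.card) :
    ∑ i : Fin n, (G.degree i : ℝ) ^ 2 ≤
      2 * (m : ℝ) ^ 2 / ((n : ℝ) - 1) + ((n : ℝ) - 2) * m := by
  set x : Fin n → Fin n → ℝ := fun a b => if G.Adj a b then 1 else 0 with hx
  have hdeg : ∀ v, (G.degree v : ℝ) = ∑ b, x v b := by
    intro v
    have h : G.degree v = ∑ b, if G.Adj v b then 1 else 0 := by
      rw [← SimpleGraph.card_neighborFinset_eq_degree, SimpleGraph.neighborFinset_eq_filter,
        Finset.card_filter]
    rw [h, hx]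
    push_cast [apply_ite (Nat.cast : ℕ → ℝ)]
    rfl
  have hM : 2 * (m : ℝ) = ∑ a, ∑ b, x a b := by
    have := G.sum_degrees_eq_twice_card_edges
    have hcast : ((∑ v, G.degree v : ℕ) : ℝ) = 2 * m := by
      rw [this, hm]; push_cast; ring
    push_cast at hcast
    rw [← hcast]
    exact Finset.sum_congr rfl fun v _ => hdeg v
  have := decaen_core n hn x
    (fun a b => by by_cases h : G.Adj a b <;> simp [hx, h])
    (fun a b => by simp only [hx]; rw [if_congr (G.adj_comm a b) rfl rfl])
    (fun a => by simp [hx])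
    (m : ℝ) hM
  calc ∑ i : Fin n, (G.degree i : ℝ) ^ 2 = ∑ a, (∑ b, x a b) ^ 2 :=
        Finset.sum_congr rfl fun v _ => by rw [hdeg v]
    _ ≤ _ := this
end

section
/- Let G be a simple graph on n ≥ 4 vertices with m edges. If m ≥ 3n + 9, then the sum of the 3 largest Laplacian eigenvalues of G satisfies μ₁ + μ₂ + μ₃ ≤ m + 6, i.e., Brouwer's conjecture holds for k = 3. -/
/-! Every Laplacian eigenvalue is at most `n`: the Rayleigh quotient satisfies
`xᵀ L x = ∑_{a ~ b} (x a - x b)² ≤ n ‖x‖² - (∑ x)²`. Hence `μ₁ + μ₂ + μ₃ ≤ 3n ≤ m - 9`. -/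

open Finset Matrix

theorem Finset.sum_sum_sub_sq {ι R : Type*} [CommRing R] (s : Finset ι) (f : ι → R) :
    ∑ i ∈ s, ∑ j ∈ s, (f i - f j) ^ 2 = 2 * (#s * ∑ i ∈ s, f i ^ 2 - (∑ i ∈ s, f i) ^ 2) := by
  simp only [sub_sq, sum_add_distrib, sum_sub_distrib, sum_const, nsmul_eq_mul, ← mul_sum,
    ← sum_mul]
  ring

namespace SimpleGraph

variable {V : Type*} [Fintype V] [DecidableEq V] (G : SimpleGraph V) [DecidableRel G.Adj]

theorem dotProduct_lapMatrix_mulVec_le {R : Type*} [Field R] [LinearOrder R]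
    [IsStrictOrderedRing R] (x : V → R) :
    x ⬝ᵥ (G.lapMatrix R *ᵥ x) ≤ Fintype.card V * (x ⬝ᵥ x) := by
  rw [← toLinearMap₂'_apply', lapMatrix_toLinearMap₂']
  have h_adj_le : (∑ a, ∑ b, if G.Adj a b then (x a - x b) ^ 2 else 0) ≤
      ∑ a, ∑ b, (x a - x b) ^ 2 :=
    sum_le_sum fun a _ ↦ sum_le_sum fun b _ ↦ by split_ifs; exacts [le_rfl, sq_nonneg _]
  have h_all := sum_sum_sub_sq univ x
  rw [card_univ] at h_all
  have h_dot : x ⬝ᵥ x = ∑ a, x a ^ 2 := by simp only [dotProduct, sq]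
  nlinarith [sq_nonneg (∑ a, x a)]

theorem lapMatrix_eigenvalues_le_card (hL : (G.lapMatrix ℝ).IsHermitian) (i : V) :
    hL.eigenvalues i ≤ Fintype.card V := by
  set v : V → ℝ := ⇑(hL.eigenvectorBasis i)
  have hv : v ⬝ᵥ v = 1 := by
    have h := EuclideanSpace.inner_eq_star_dotProduct (hL.eigenvectorBasis i)
      (hL.eigenvectorBasis i)
    rwa [real_inner_self_eq_norm_sq, hL.eigenvectorBasis.orthonormal.1 i, one_pow, star_trivial,
      eq_comm] at h
  have h := G.dotProduct_lapMatrix_mulVec_le v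
  rw [hv, mul_one] at h
  simpa only [hL.eigenvalues_eq, star_trivial, RCLike.re_to_real] using h

end SimpleGraph

/-- For a simple graph on `n ≥ 4` vertices with `m ≥ 3n + 9`
edges, the sum of the three largest Laplacian eigenvalues is at most `m + 6`
(Brouwer's conjecture for `k = 3`). -/
theorem stmt18 {n : ℕ} (hn : 4 ≤ n) (G : SimpleGraph (Fin n)) [DecidableRel G.Adj]
    (m : ℕ) (hm3 : 3 * n + 9 ≤ m)
    (hL : (G.lapMatrix ℝ).IsHermitian)
    (mu : Fin n → ℝ) (σ : Equiv.Perm (Fin n))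
    (hmu : mu = hL.eigenvalues ∘ σ) :
    mu ⟨0, by omega⟩ + mu ⟨1, by omega⟩ + mu ⟨2, by omega⟩ ≤ (m : ℝ) + 6 := by
  have hmu_le (j : Fin n) : mu j ≤ n := by
    simpa only [hmu, Function.comp_apply, Fintype.card_fin] using
      G.lapMatrix_eigenvalues_le_card hL (σ j)
  have hm3' : (3 * n + 9 : ℝ) ≤ m := by exact_mod_cast hm3
  linarith [hmu_le ⟨0, by omega⟩, hmu_le ⟨1, by omega⟩, hmu_le ⟨2, by omega⟩]
end
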